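/- Let A, A', A'' be information systems with witnesses, H: A ⊦ A' and G: A' ⊦ A'' approximable mappings, and define (i,X) (H∘G) c iff there exists (j,Y) ∈ Con' with (i,X) H (j,Y) and (j,Y) G c. Then H∘G is an approximable mapping from A to A''. Moreover, the entailment relation Id_A (given by (i,X) Id_A a iff (i,X) ⊢ a) is an approximable mapping from A to A, and H ∘ Id_{A'} = H = Id_A ∘ H. -/

import Mathlib

/-- The way-below (approximation) relation in a preorder: `x` approximates `y` if
for every directed set `S` whose least upper bound exists, `y ≤ sup S` implies
`x ≤ u` for some `u ∈ S`. -/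
def wayBelow {α : Type*} [Preorder α] (x y : α) : Prop :=
  ∀ S : Set α, DirectedOn (· ≤ ·) S → S.Nonempty →
    ∀ l, IsLUB S l → y ≤ l → ∃ u ∈ S, x ≤ u

/-- Information system with witnesses (Definition 3.1). -/
structure IWS (A : Type*) where
  Δ : A
  Con : A → Finset A → Prop
  ent : A → Finset A → A → Prop
  entCon : ∀ i X a, ent i X a → Con i X
  ax1 : ∀ i, Con i {i}
  ax2 : ∀ i X Y, Y ⊆ X → Con i X → Con i Y
  ax3 : ∀ i, ent i ∅ Δ
  ax4 : ∀ i X Y, Con i X → (∀ a ∈ Y, ent i X a) → Con i Y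
  ax5 : ∀ i X Y a, Con i X → Con i Y → X ⊆ Y → ent i X a → ent i Y a
  ax6 : ∀ i X Y a, Con i X → (∀ b ∈ Y, ent i X b) → ent i Y a → ent i X a
  ax7 : ∀ i X a, ent i X a → ∃ Z, Con i Z ∧ (∀ z ∈ Z, ent i X z) ∧ ent i Z a
  ax8 : ∀ i X Y, Con i X → (∀ y ∈ Y, ent i X y) → ∃ e, ent i X e ∧ Con e Y
  ax9 : ∀ i j, Con j {i} → ∀ X, Con i X → Con j X
  ax10 : ∀ i j X a, Con j {i} → Con i X → ent i X a → ent j X a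
  ax11 : ∀ i j X a, Con j {i} → Con i X → ent j X a → ent i X a

namespace IWS

variable {A : Type*}

/-- A state of an information system with witnesses (Definition 3.5):
finitely consistent, entailment-closed and derivable. -/
def state (S : IWS A) (x : Set A) : Prop :=
  (∀ F : Finset A, ↑F ⊆ x → ∃ i ∈ x, S.Con i F) ∧
  (∀ i ∈ x, ∀ X : Finset A, ↑X ⊆ x → ∀ a, S.Con i X → S.ent i X a → a ∈ x) ∧
  (∀ a ∈ x, ∃ i ∈ x, ∃ X : Finset A, ↑X ⊆ x ∧ S.Con i X ∧ S.ent i X a)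

/-- X-equivalence of witnesses (Definition 5.1). -/
def weq (S : IWS A) (X : Finset A) (i j : A) : Prop :=
  ∃ (n : ℕ) (a k : ℕ → A), a 0 = i ∧ a n = j ∧
    ∀ ν, 1 ≤ ν → ν ≤ n →
      S.Con (a (ν - 1)) X ∧ S.Con (a ν) X ∧
      S.Con (k ν) {a (ν - 1)} ∧ S.Con (k ν) {a ν}

end IWS

/-- Approximable mappings between information systems with witnesses (Definition 4.1). -/
structure AppMap {A A' : Type*} (S : IWS A) (S' : IWS A') where
  rel : A → Finset A → A' → Prop
  relCon : ∀ i X b, rel i X b → S.Con i X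
  am1 : rel S.Δ ∅ S'.Δ
  am2 : ∀ i X X' b, S.Con i X → S.Con i X' → X ⊆ X' → rel i X b → rel i X' b
  am3 : ∀ i X X' b, S.Con i X → (∀ a ∈ X', S.ent i X a) → rel i X' b → rel i X b
  am4 : ∀ i X b, S.Con i X → rel i X b →
    ∃ U, S.Con i U ∧ (∀ u ∈ U, S.ent i X u) ∧ rel i U b
  am5 : ∀ i X k Y b, S.Con i X → S'.Con k Y → rel i X k → (∀ y ∈ Y, rel i X y) →
    S'.ent k Y b → rel i X b
  am6 : ∀ i X b, S.Con i X → rel i X b →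
    ∃ d V, S'.Con d V ∧ rel i X d ∧ (∀ v ∈ V, rel i X v) ∧ S'.ent d V b
  am7 : ∀ i X F, S.Con i X → (∀ c ∈ F, rel i X c) → ∃ e, rel i X e ∧ S'.Con e F
  am8 : ∀ i j X b, S.Con j {i} → S.Con i X → rel i X b → rel j X b
  am9 : ∀ i j X b, S.Con j {i} → S.Con i X → rel j X b → rel i X b


/-- Composition of relations between information systems. -/
def iwsCompRel {A A' A'' : Type*} (S' : IWS A')
    (h : A → Finset A → A' → Prop) (g : A' → Finset A' → A'' → Prop) :
    A → Finset A → A'' → Prop :=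
  fun i X c => ∃ j Y, S'.Con j Y ∧ h i X j ∧ (∀ y ∈ Y, h i X y) ∧ g j Y c


/-!
The axioms of `H ∘ G` are inherited from those of `H` and `G`, except where finitely many
composite images have to be realised through one middle pair `(e, W)`. There one takes a common
witness `e` of all middle points involved (interpolation `am7` for `H`), moves every `G`-step to
the witness `e` (`am8` for `G`) and enlarges its argument to the union of the middle sets.
For the identity laws, `H ∘ Id = H` is exactly the right cut and interpolation of `H`, while
`Id ∘ H = H` is its left cut and interpolation, combined with a common witness `e` for the
interpolating set provided by `ax8` and a witness change.
-/

namespace IWS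

variable {A : Type*} (S : IWS A)

lemma con_singleton_of_ent {i : A} {X : Finset A} {a : A} (hX : S.Con i X)
    (h : S.ent i X a) : S.Con i {a} :=
  S.ax4 i X {a} hX (by simpa using h)

end IWS

namespace AppMap

variable {A A' A'' : Type*} {S : IWS A} {S' : IWS A'} {S'' : IWS A''}

lemma rel_of_con_singleton_of_subset (H : AppMap S S') {i j : A} {X X' : Finset A} {b : A'}
    (hji : S.Con j {i}) (hX : S.Con i X) (hX' : S.Con j X') (hXX' : X ⊆ X')
    (h : H.rel i X b) : H.rel j X' b :=
  H.am2 j X X' b (S.ax9 i j hji X hX) hX' hXX' (H.am8 i j X b hji hX h)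

lemma exists_ent_forall_rel (H : AppMap S S') {i : A} {X : Finset A} (hX : S.Con i X)
    (T : Finset A') (hT : ∀ t ∈ T, H.rel i X t) :
    ∃ U, S.Con i U ∧ (∀ u ∈ U, S.ent i X u) ∧ ∀ t ∈ T, H.rel i U t := by
  classical
  induction T using Finset.induction_on with
  | empty => exact ⟨∅, S.ax2 i X ∅ (Finset.empty_subset _) hX, by simp, by simp⟩
  | @insert a T _ ih =>
    rw [Finset.forall_mem_insert] at hT
    obtain ⟨U, hU, hUent, hUrel⟩ := ih hT.2
    obtain ⟨U', hU', hU'ent, hU'rel⟩ := H.am4 i X a hX hT.1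
    have hent : ∀ u ∈ U ∪ U', S.ent i X u := Finset.forall_mem_union.2 ⟨hUent, hU'ent⟩
    have hcon : S.Con i (U ∪ U') := S.ax4 i X _ hX hent
    refine ⟨U ∪ U', hcon, hent, Finset.forall_mem_insert _ _ _ |>.2 ⟨?_, fun t ht => ?_⟩⟩
    · exact H.am2 i U' _ a hU' hcon Finset.subset_union_right hU'rel
    · exact H.am2 i U _ t hU hcon Finset.subset_union_left (hUrel t ht)

lemma exists_common_middle (H : AppMap S S') (G : AppMap S' S'') {i : A} {X : Finset A}
    (hX : S.Con i X) (T : Finset A'') (hT : ∀ t ∈ T, iwsCompRel S' H.rel G.rel i X t) :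
    ∃ e W, S'.Con e W ∧ H.rel i X e ∧ (∀ w ∈ W, H.rel i X w) ∧ ∀ t ∈ T, G.rel e W t := by
  classical
  induction T using Finset.induction_on with
  | empty =>
    obtain ⟨e, he, hcon⟩ := H.am7 i X ∅ hX (by simp)
    exact ⟨e, ∅, hcon, he, by simp, by simp⟩
  | @insert t T _ ih =>
    rw [Finset.forall_mem_insert] at hT
    obtain ⟨e, W, hW, he, hWrel, hGW⟩ := ih hT.2
    obtain ⟨j, Y, hY, hj, hYrel, hGY⟩ := hT.1
    obtain ⟨e', he', hcon⟩ := H.am7 i X (insert e (insert j (W ∪ Y))) hX (by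
      simp only [Finset.forall_mem_insert, Finset.forall_mem_union]
      exact ⟨he, hj, hWrel, hYrel⟩)
    have hconSub := fun s (hs : s ⊆ insert e (insert j (W ∪ Y))) => S'.ax2 e' _ s hs hcon
    have hWY : S'.Con e' (W ∪ Y) :=
      hconSub _ ((Finset.subset_insert _ _).trans (Finset.subset_insert _ _))
    refine ⟨e', W ∪ Y, hWY, he', Finset.forall_mem_union.2 ⟨hWrel, hYrel⟩,
      Finset.forall_mem_insert _ _ _ |>.2 ⟨?_, fun t' ht' => ?_⟩⟩
    · exact G.rel_of_con_singleton_of_subset (hconSub {j} (by simp)) hY hWY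
        Finset.subset_union_right hGY
    · exact G.rel_of_con_singleton_of_subset (hconSub {e} (by simp)) hW hWY
        Finset.subset_union_left (hGW t' ht')

def comp (H : AppMap S S') (G : AppMap S' S'') : AppMap S S'' where
  rel := iwsCompRel S' H.rel G.rel
  relCon := fun i X _ ⟨j, _, _, hj, _, _⟩ => H.relCon i X j hj
  am1 := ⟨S'.Δ, ∅, S'.ax2 S'.Δ {S'.Δ} ∅ (Finset.empty_subset _) (S'.ax1 S'.Δ),
    H.am1, by simp, G.am1⟩
  am2 := fun i X X' _ hX hX' hXX' ⟨j, Y, hY, hj, hYrel, hG⟩ =>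
    ⟨j, Y, hY, H.am2 i X X' j hX hX' hXX' hj,
      fun y hy => H.am2 i X X' y hX hX' hXX' (hYrel y hy), hG⟩
  am3 := fun i X X' _ hX hent ⟨j, Y, hY, hj, hYrel, hG⟩ =>
    ⟨j, Y, hY, H.am3 i X X' j hX hent hj, fun y hy => H.am3 i X X' y hX hent (hYrel y hy), hG⟩
  am4 := by
    classical
    rintro i X b hX ⟨j, Y, hY, hj, hYrel, hG⟩
    obtain ⟨U, hU, hUent, hUrel⟩ :=
      H.exists_ent_forall_rel hX (insert j Y) (Finset.forall_mem_insert _ _ _ |>.2 ⟨hj, hYrel⟩)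
    rw [Finset.forall_mem_insert] at hUrel
    exact ⟨U, hU, hUent, j, Y, hY, hUrel.1, hUrel.2, hG⟩
  am5 := by
    classical
    intro i X k Y b hX hY hk hYrel hent
    obtain ⟨e, W, hW, he, hWrel, hG⟩ :=
      exists_common_middle H G hX (insert k Y) (Finset.forall_mem_insert _ _ _ |>.2 ⟨hk, hYrel⟩)
    rw [Finset.forall_mem_insert] at hG
    exact ⟨e, W, hW, he, hWrel, G.am5 e W k Y b hW hY hG.1 hG.2 hent⟩
  am6 := by
    rintro i X b - ⟨j, Y, hY, hj, hYrel, hG⟩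
    obtain ⟨d, V, hV, hd, hVrel, hent⟩ := G.am6 j Y b hY hG
    exact ⟨d, V, hV, ⟨j, Y, hY, hj, hYrel, hd⟩, fun v hv => ⟨j, Y, hY, hj, hYrel, hVrel v hv⟩, hent⟩
  am7 := by
    intro i X F hX hF
    obtain ⟨e, W, hW, he, hWrel, hG⟩ := exists_common_middle H G hX F hF
    obtain ⟨e'', he'', hcon⟩ := G.am7 e W F hW hG
    exact ⟨e'', ⟨e, W, hW, he, hWrel, he''⟩, hcon⟩
  am8 := fun i j X _ hji hX ⟨k, Y, hY, hk, hYrel, hG⟩ =>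
    ⟨k, Y, hY, H.am8 i j X k hji hX hk, fun y hy => H.am8 i j X y hji hX (hYrel y hy), hG⟩
  am9 := fun i j X _ hji hX ⟨k, Y, hY, hk, hYrel, hG⟩ =>
    ⟨k, Y, hY, H.am9 i j X k hji hX hk, fun y hy => H.am9 i j X y hji hX (hYrel y hy), hG⟩

def id (S : IWS A) : AppMap S S where
  rel := S.ent
  relCon := S.entCon
  am1 := S.ax3 S.Δ
  am2 := S.ax5
  am3 := S.ax6
  am4 := fun i X b _ h => S.ax7 i X b h
  am5 := fun i X k Y b hX hY hk hYent hent =>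
    S.ax6 i X Y b hX hYent (S.ax10 k i Y b (S.con_singleton_of_ent hX hk) hY hent)
  am6 := by
    intro i X b hX h
    obtain ⟨Z, -, hZent, hb⟩ := S.ax7 i X b h
    obtain ⟨e, he, hZ⟩ := S.ax8 i X Z hX hZent
    exact ⟨e, Z, hZ, he, hZent, S.ax11 e i Z b (S.con_singleton_of_ent hX he) hZ hb⟩
  am7 := S.ax8
  am8 := S.ax10
  am9 := S.ax11

lemma iwsCompRel_ent_right (H : AppMap S S') : iwsCompRel S' H.rel S'.ent = H.rel := by
  funext i X b
  refine propext ⟨fun ⟨j, Y, hY, hj, hYrel, hent⟩ => ?_, fun h => ?_⟩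
  · exact H.am5 i X j Y b (H.relCon i X j hj) hY hj hYrel hent
  · exact H.am6 i X b (H.relCon i X b h) h

lemma iwsCompRel_ent_left (H : AppMap S S') : iwsCompRel S S.ent H.rel = H.rel := by
  funext i X c
  refine propext ⟨fun ⟨j, Y, hY, hj, hYent, hH⟩ => ?_, fun h => ?_⟩
  · have hX : S.Con i X := S.entCon i X j hj
    exact H.am3 i X Y c hX hYent (H.am8 j i Y c (S.con_singleton_of_ent hX hj) hY hH)
  · have hX : S.Con i X := H.relCon i X c h
    obtain ⟨U, -, hUent, hU⟩ := H.am4 i X c hX h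
    obtain ⟨e, he, heU⟩ := S.ax8 i X U hX hUent
    exact ⟨e, U, heU, he, hUent, H.am9 e i U c (S.con_singleton_of_ent hX he) heU hU⟩

end AppMap

/-- Composition of approximable mappings is an approximable mapping, entailment
is an approximable mapping, and it is a two-sided identity for composition. -/
theorem appmap_comp_id {A A' A'' : Type*} (S : IWS A) (S' : IWS A') (S'' : IWS A'')
    (H : AppMap S S') (G : AppMap S' S'') :
    (∃ K : AppMap S S'', K.rel = iwsCompRel S' H.rel G.rel) ∧
    (∃ I : AppMap S S, I.rel = S.ent) ∧
    iwsCompRel S' H.rel S'.ent = H.rel ∧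
    iwsCompRel S S.ent H.rel = H.rel :=
  ⟨⟨H.comp G, rfl⟩, ⟨AppMap.id S, rfl⟩, H.iwsCompRel_ent_right, H.iwsCompRel_ent_left⟩
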